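/- arXiv:2510.21741 — 2 statements merged into one kernel-verified Lean document; each statement's English description precedes it below -/
import Mathlib

section
/- Let F be a field and let ι : a → e, π : e → g be a central extension of g by a. Then there exist a 2-cocycle ω of g with coefficients in a and a Lie algebra isomorphism φ : e ≃ e_ω such that φ (ι A) = ι_ω A for all A ∈ a and π_ω (φ E) = π E for all E ∈ e; that is, every central extension is equivalent to one constructed from a 2-cocycle. -/
/-!
Over a field the exact sequence `0 → a → e → g → 0` splits linearly: `e ≃ g × a` with `ι A ↦ (0, A)`
and first coordinate `π`. Because `ι a` is central, the bracket of `e` only sees the `g`-components,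
so transported to `g × a` it reads `⁅(X, A), (Y, B)⁆ = (⁅X, Y⁆, ω X Y)`, where `ω X Y` is the
`a`-component of the bracket of the lifts of `X` and `Y`. The cocycle identities for `ω` are then
the Jacobi identity and alternation of the bracket of `e`.
-/

namespace VirasoroProject

variable (F : Type*) [CommRing F]
variable (g : Type*) [LieRing g] [LieAlgebra F g]
variable (a : Type*) [AddCommGroup a] [Module F a]

/-- A 2-cocycle of a Lie algebra `g` with coefficients in the `F`-module `a`
(regarded as an abelian Lie algebra): a bilinear map `ω : g → g → a` with
`ω X X = 0` satisfying the Leibniz rule. -/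
structure LieTwoCocycle where
  toBilin : g →ₗ[F] g →ₗ[F] a
  self' : ∀ X, toBilin X X = 0
  leibniz' : ∀ X Y Z, toBilin X ⁅Y, Z⁆ = toBilin ⁅X, Y⁆ Z + toBilin Y ⁅X, Z⁆

variable {F g a}

/-- The central extension `e_ω` of `g` by `a` determined by a 2-cocycle `ω`:
the product module `g × a`. -/
def LieTwoCocycle.CentralExtension (_ω : LieTwoCocycle F g a) := g × a

namespace LieTwoCocycle.CentralExtension

variable (ω : LieTwoCocycle F g a)

instance : AddCommGroup ω.CentralExtension := inferInstanceAs (AddCommGroup (g × a))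

instance : Module F ω.CentralExtension := inferInstanceAs (Module F (g × a))

/-- The Lie ring structure on `e_ω`: `⁅(X, A), (Y, B)⁆ = (⁅X, Y⁆, ω X Y)`. -/
instance : LieRing ω.CentralExtension :=
  { (inferInstance : AddCommGroup (g × a)) with
    bracket := fun X Y => (⁅X.1, Y.1⁆, ω.toBilin X.1 Y.1)
    add_lie := by
      intro x y z
      refine Prod.ext ?_ ?_
      · show ⁅x.1 + y.1, z.1⁆ = ⁅x.1, z.1⁆ + ⁅y.1, z.1⁆
        exact add_lie _ _ _
      · show ω.toBilin (x.1 + y.1) z.1 = ω.toBilin x.1 z.1 + ω.toBilin y.1 z.1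
        simp
    lie_add := by
      intro x y z
      refine Prod.ext ?_ ?_
      · show ⁅x.1, y.1 + z.1⁆ = ⁅x.1, y.1⁆ + ⁅x.1, z.1⁆
        exact lie_add _ _ _
      · show ω.toBilin x.1 (y.1 + z.1) = ω.toBilin x.1 y.1 + ω.toBilin x.1 z.1
        simp
    lie_self := by
      intro x
      refine Prod.ext ?_ ?_
      · show ⁅x.1, x.1⁆ = (0 : g)
        exact lie_self _
      · show ω.toBilin x.1 x.1 = (0 : a)
        exact ω.self' _
    leibniz_lie := by
      intro x y z
      refine Prod.ext ?_ ?_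
      · show ⁅x.1, ⁅y.1, z.1⁆⁆ = ⁅⁅x.1, y.1⁆, z.1⁆ + ⁅y.1, ⁅x.1, z.1⁆⁆
        exact leibniz_lie _ _ _
      · show ω.toBilin x.1 ⁅y.1, z.1⁆
            = ω.toBilin ⁅x.1, y.1⁆ z.1 + ω.toBilin y.1 ⁅x.1, z.1⁆
        exact ω.leibniz' _ _ _ }

/-- The Lie algebra structure on `e_ω`. -/
instance : LieAlgebra F ω.CentralExtension :=
  { (inferInstance : Module F ω.CentralExtension) with
    lie_smul := by
      intro c x y
      refine Prod.ext ?_ ?_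
      · show ⁅x.1, c • y.1⁆ = c • ⁅x.1, y.1⁆
        exact lie_smul _ _ _
      · show ω.toBilin x.1 (c • y.1) = c • ω.toBilin x.1 y.1
        simp }

/-- The inclusion `ι : a → e_ω`, `A ↦ (0, A)`, as a linear map. -/
def emb : a →ₗ[F] ω.CentralExtension where
  toFun A := ((0, A) : g × a)
  map_add' A B := by
    refine Prod.ext ?_ ?_
    · show (0 : g) = 0 + 0
      simp
    · rfl
  map_smul' c A := by
    refine Prod.ext ?_ ?_
    · show (0 : g) = c • 0
      simp
    · rfl

/-- The projection `π : e_ω → g`, `(X, A) ↦ X`, as a Lie algebra homomorphism. -/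
def proj : ω.CentralExtension →ₗ⁅F⁆ g where
  toFun E := E.1
  map_add' _ _ := rfl
  map_smul' _ _ := rfl
  map_lie' := rfl

end LieTwoCocycle.CentralExtension

namespace LieTwoCocycle

section Splitting

variable {F g a e : Type*} [CommRing F] [LieRing g] [LieAlgebra F g]
  [AddCommGroup a] [Module F a] [LieRing e] [LieAlgebra F e]

def splittingBilin (φ : e ≃ₗ[F] g × a) : g →ₗ[F] g →ₗ[F] a :=
  ((LieModule.toEnd F e e : e →ₗ[F] Module.End F e).compr₂
      (LinearMap.snd F g a ∘ₗ φ.toLinearMap)).compl₁₂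
    (φ.symm.toLinearMap ∘ₗ LinearMap.inl F g a) (φ.symm.toLinearMap ∘ₗ LinearMap.inl F g a)

@[simp]
lemma splittingBilin_apply (φ : e ≃ₗ[F] g × a) (X Y : g) :
    splittingBilin φ X Y = (φ ⁅φ.symm (X, 0), φ.symm (Y, 0)⁆).2 :=
  rfl

variable {φ : e ≃ₗ[F] g × a}

lemma lie_eq_lie_symm_fst (hcentral : ∀ (A : a) (E : e), ⁅φ.symm (0, A), E⁆ = 0) (E E' : e) :
    ⁅E, E'⁆ = ⁅φ.symm ((φ E).1, 0), φ.symm ((φ E').1, 0)⁆ := by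
  have hdecomp : ∀ E : e, E = φ.symm ((φ E).1, 0) + φ.symm (0, (φ E).2) := fun E => by
    rw [← map_add, Prod.mk_add_mk, add_zero, zero_add, LinearEquiv.symm_apply_apply]
  have hcentral' : ∀ A E, ⁅E, φ.symm (0, A)⁆ = 0 := fun A E => by
    rw [← lie_skew, hcentral, neg_zero]
  conv_lhs => rw [hdecomp E, hdecomp E']
  simp only [add_lie, lie_add, hcentral, hcentral', add_zero]

lemma apply_lie_eq (hcentral : ∀ (A : a) (E : e), ⁅φ.symm (0, A), E⁆ = 0)
    (hlie : ∀ E E', (φ ⁅E, E'⁆).1 = ⁅(φ E).1, (φ E').1⁆) (E E' : e) :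
    φ ⁅E, E'⁆ = (⁅(φ E).1, (φ E').1⁆, splittingBilin φ (φ E).1 (φ E').1) := by
  refine Prod.ext (hlie E E') ?_
  rw [lie_eq_lie_symm_fst hcentral, splittingBilin_apply]

def ofSplitting (hcentral : ∀ (A : a) (E : e), ⁅φ.symm (0, A), E⁆ = 0)
    (hlie : ∀ E E', (φ ⁅E, E'⁆).1 = ⁅(φ E).1, (φ E').1⁆) : LieTwoCocycle F g a where
  toBilin := splittingBilin φ
  self' X := by simp [splittingBilin]
  leibniz' X Y Z := by
    have hbilin : ∀ E E', splittingBilin φ (φ E).1 (φ E').1 = (φ ⁅E, E'⁆).2 := fun E E' =>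
      (congrArg Prod.snd (apply_lie_eq hcentral hlie E E')).symm
    obtain ⟨x, rfl⟩ : ∃ x, (φ x).1 = X := ⟨φ.symm (X, 0), by simp⟩
    obtain ⟨y, rfl⟩ : ∃ y, (φ y).1 = Y := ⟨φ.symm (Y, 0), by simp⟩
    obtain ⟨z, rfl⟩ : ∃ z, (φ z).1 = Z := ⟨φ.symm (Z, 0), by simp⟩
    simp only [← hlie, hbilin, leibniz_lie x y z, map_add, Prod.snd_add]

def lieEquivOfSplitting (hcentral : ∀ (A : a) (E : e), ⁅φ.symm (0, A), E⁆ = 0)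
    (hlie : ∀ E E', (φ ⁅E, E'⁆).1 = ⁅(φ E).1, (φ E').1⁆) :
    e ≃ₗ⁅F⁆ (ofSplitting hcentral hlie).CentralExtension :=
  { φ with map_lie' := apply_lie_eq hcentral hlie _ _ }

end Splitting

end LieTwoCocycle

lemma exists_linearEquiv_prod_of_exact {F a e g : Type*} [Field F] [AddCommGroup a] [Module F a]
    [AddCommGroup e] [Module F e] [AddCommGroup g] [Module F g] {i : a →ₗ[F] e} {p : e →ₗ[F] g}
    (hexact : Function.Exact i p) (hinj : Function.Injective i) (hsurj : Function.Surjective p) :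
    ∃ φ : e ≃ₗ[F] g × a, (∀ A, φ (i A) = (0, A)) ∧ ∀ E, (φ E).1 = p E := by
  obtain ⟨s, hs⟩ := p.exists_rightInverse_of_surjective (LinearMap.range_eq_top.mpr hsurj)
  obtain ⟨ψ, hi, hp⟩ := hexact.splitSurjectiveEquiv hinj ⟨s, hs⟩
  refine ⟨ψ.trans (LinearEquiv.prodComm F a g), fun A => ?_, fun E => ?_⟩
  · simp [hi]
  · simp [hp]

section Statement8

variable {F' : Type*} [Field F']
variable {g' : Type*} [LieRing g'] [LieAlgebra F' g']
variable {a' : Type*} [AddCommGroup a'] [Module F' a']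
variable {e : Type*} [LieRing e] [LieAlgebra F' e]

/-- STATEMENT 8: over a field, every central extension `0 → a → e → g → 0` is equivalent
to one constructed from a 2-cocycle: there are a 2-cocycle `ω` and a Lie algebra
isomorphism `φ : e ≃ e_ω` commuting with the inclusions and projections. -/
theorem exists_cocycle_equiv_of_isCentralExtension
    (i : a' →ₗ[F'] e) (p : e →ₗ⁅F'⁆ g')
    (hinj : Function.Injective i) (hsurj : Function.Surjective p)
    (hexact : ∀ E : e, (∃ A : a', i A = E) ↔ p E = 0)
    (hcentral : ∀ (A : a') (E : e), ⁅i A, E⁆ = 0) :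
    ∃ (ω : LieTwoCocycle F' g' a') (φ : e ≃ₗ⁅F'⁆ ω.CentralExtension),
      (∀ A : a', φ (i A) = LieTwoCocycle.CentralExtension.emb ω A) ∧
      (∀ E : e, LieTwoCocycle.CentralExtension.proj ω (φ E) = p E) := by
  obtain ⟨φ, hφi, hφp⟩ := exists_linearEquiv_prod_of_exact (p := (p : e →ₗ[F'] g'))
    (fun E => (hexact E).symm) hinj hsurj
  have hcentral' : ∀ (A : a') (E : e), ⁅φ.symm (0, A), E⁆ = 0 := fun A E => by
    rw [φ.symm_apply_eq.mpr (hφi A).symm, hcentral]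
  have hlie : ∀ E E', (φ ⁅E, E'⁆).1 = ⁅(φ E).1, (φ E').1⁆ := fun E E' => by
    simp only [hφp, LieHom.coe_toLinearMap, LieHom.map_lie]
  exact ⟨_, LieTwoCocycle.lieEquivOfSplitting hcentral' hlie, hφi, hφp⟩

end Statement8

end VirasoroProject
end

section
/- Let M be an A-module with a vector u ∈ M satisfying (η i).1 • u = algebraMap F A ((η i).2) • u for every i : ι. Then there exists a unique A-linear map f : M_η → A-module M such that f v_η = u; i.e. the Verma module M_η satisfies the universal property of highest weight modules for the data η. -/
namespace VirasoroProject

variable (F : Type*) [Field F] (A : Type*) [Ring A] [Algebra F A]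
variable {ι : Type*}

/-- The Verma ideal `I_η`: the left ideal of `A` (as a submodule of `A` regarded as a
left module over itself) spanned by the elements `(η i).1 - algebraMap F A (η i).2`. -/
def vermaIdeal (η : ι → A × F) : Submodule A A :=
  Submodule.span A (Set.range fun i => (η i).1 - algebraMap F A (η i).2)

/-- The Verma module `M_η := A ⧸ I_η`, a left `A`-module. -/
abbrev VermaModule (η : ι → A × F) := A ⧸ vermaIdeal F A η

/-- The highest weight vector `v_η`: the image of `1 ∈ A` in the quotient `A ⧸ I_η`. -/
def hwVec (η : ι → A × F) : VermaModule F A η :=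
  Submodule.Quotient.mk 1

/-! `A ⧸ I` is the cyclic module generated by `1` subject to the relations `I`, so its maps to
`M` are the orbit maps `a ↦ a • u` of the vectors `u` killed by `I`. -/

section CyclicQuotient

variable {R M : Type*} [Ring R] [AddCommGroup M] [Module R M]

theorem Submodule.existsUnique_quotient_linearMap_mk_one (I : Submodule R R) (u : M)
    (hI : ∀ a ∈ I, a • u = 0) :
    ∃! f : (R ⧸ I) →ₗ[R] M, f (Submodule.Quotient.mk 1) = u := by
  have hker : I ≤ LinearMap.ker (LinearMap.toSpanSingleton R M u) := hI
  refine ⟨I.liftQ (LinearMap.toSpanSingleton R M u) hker, by simp, fun g hg => ?_⟩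
  refine Submodule.linearMap_qext I (LinearMap.ext_ring ?_)
  simp [hg]

theorem Submodule.smul_eq_zero_of_mem_span {S : Set R} {u : M} (hS : ∀ s ∈ S, s • u = 0)
    {a : R} (ha : a ∈ Submodule.span R S) : a • u = 0 :=
  (Submodule.span_le (p := LinearMap.ker (LinearMap.toSpanSingleton R M u))).mpr hS ha

end CyclicQuotient

theorem smul_eq_zero_of_mem_vermaIdeal {η : ι → A × F} {M : Type*} [AddCommGroup M]
    [Module A M] {u : M} (hu : ∀ i : ι, (η i).1 • u = algebraMap F A ((η i).2) • u)
    {a : A} (ha : a ∈ vermaIdeal F A η) : a • u = 0 := by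
  refine Submodule.smul_eq_zero_of_mem_span ?_ ha
  rintro _ ⟨i, rfl⟩
  rw [sub_smul, hu i, sub_self]

/-- STATEMENT 17: universal property of the Verma module: for any `A`-module `M` with a
vector `u` satisfying `(η i).1 • u = algebraMap F A (η i).2 • u` for all `i`, there is a
unique `A`-linear map `f : M_η → M` with `f v_η = u`. -/
theorem vermaModule_universal_property (η : ι → A × F)
    (M : Type*) [AddCommGroup M] [Module A M] (u : M)
    (hu : ∀ i : ι, (η i).1 • u = algebraMap F A ((η i).2) • u) :
    ∃! f : VermaModule F A η →ₗ[A] M, f (hwVec F A η) = u :=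
  Submodule.existsUnique_quotient_linearMap_mk_one _ u
    fun _ ha => smul_eq_zero_of_mem_vermaIdeal F A hu ha

end VirasoroProject
end
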